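/- arXiv:math/0501163 — 4 statements merged into one kernel-verified Lean document; each statement's English description precedes it below -/
import Mathlib

section
/- For 0 < r < 1 and p > 0, the function I_p(r) = ∫₀¹ |1 - r^{1/p} e(t)|^p dt satisfies I_p(r) = Σ_{m≥0} C(p/2, m)² r^{2m/p}, where C(p/2, m) is the generalized binomial coefficient. -/
open MeasureTheory

noncomputable def e (t : ℝ) : ℂ := Complex.exp (2 * Real.pi * Complex.I * t)

/-- I_p(r) = ∫₀¹ |1 - r^{1/p} e(t)|^p dt -/
noncomputable def Ip (p r : ℝ) : ℝ :=
  ∫ t in (0:ℝ)..1, ‖(1 - ((r ^ (1/p) : ℝ) : ℂ) * e t)‖ ^ p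

/-- generalized binomial coefficient C(x, m) -/
noncomputable def genBinom (x : ℝ) (m : ℕ) : ℝ :=
  (∏ i ∈ Finset.range m, (x - i)) / (Nat.factorial m)

/-!
With `s = r^{1/p} < 1`, the binomial series gives
`(1 - s e(t))^{p/2} = ∑ C(p/2, m) (-s)^m e(t)^m`, absolutely convergent uniformly in `t`,
and `|1 - s e(t)|^p = |(1 - s e(t))^{p/2}|²`. Since the `e(t)^m` are orthonormal on `[0, 1]`,
Parseval's identity for this absolutely convergent series gives `I_p(r) = ∑ C(p/2, m)² s^{2m}`.
-/

open ComplexConjugate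

lemma genBinom_eq_choose (x : ℝ) (m : ℕ) : genBinom x m = Ring.choose x m := by
  rw [Ring.choose_eq_smul, ← Polynomial.aeval_eq_smeval, Polynomial.aeval_def,
    Polynomial.eval₂_eq_eval_map, descPochhammer_map, descPochhammer_eval_eq_prod_range,
    genBinom, smul_eq_mul, inv_mul_eq_div]

lemma hasSum_genBinom_mul_pow (x : ℝ) {z : ℂ} (hz : ‖z‖ < 1) :
    HasSum (fun m => (genBinom x m : ℂ) * z ^ m) ((1 + z) ^ (x : ℂ)) := by
  have := Complex.one_add_cpow_hasFPowerSeriesOnBall_zero (a := (x : ℂ)) |>.hasSum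
    (y := z) (by simpa [← ofReal_norm] using hz)
  simpa [binomialSeries, genBinom_eq_choose, Complex.ofReal_choose, mul_comm] using this

lemma summable_norm_genBinom_mul_pow (x : ℝ) {z : ℂ} (hz : ‖z‖ < 1) :
    Summable fun m => ‖(genBinom x m : ℂ) * z ^ m‖ := by
  have := (binomialSeries ℂ (x : ℂ)).summable_norm_apply (x := z)
    (lt_of_lt_of_le (by simpa [← ofReal_norm] using hz) binomialSeries_radius_ge_one)
  simpa [binomialSeries, genBinom_eq_choose, Complex.ofReal_choose, mul_comm] using this

lemma norm_e (t : ℝ) : ‖e t‖ = 1 := by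
  rw [e, show 2 * (Real.pi : ℂ) * Complex.I * t = ((2 * Real.pi * t : ℝ) : ℂ) * Complex.I by
    push_cast; ring]
  exact Complex.norm_exp_ofReal_mul_I _

lemma continuous_e : Continuous e := by
  unfold e
  fun_prop

lemma conj_e_pow_mul_e_pow (m n : ℕ) (t : ℝ) :
    conj (e t ^ m) * e t ^ n = Complex.exp (2 * Real.pi * Complex.I * ((n - m : ℤ) : ℂ) * t) := by
  rw [e, map_pow, ← Complex.exp_conj, ← Complex.exp_nat_mul, ← Complex.exp_nat_mul,
    ← Complex.exp_add]
  congr 1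
  simp only [map_mul, Complex.conj_ofReal, Complex.conj_I, map_ofNat]
  push_cast
  ring

lemma integral_exp_two_pi_I_int_mul (k : ℤ) :
    ∫ t in (0 : ℝ)..1, Complex.exp (2 * Real.pi * Complex.I * k * t) = if k = 0 then 1 else 0 := by
  split_ifs with hk
  · simp [hk]
  · have hc : 2 * Real.pi * Complex.I * k ≠ 0 := by simp [Real.pi_ne_zero, hk]
    have hperiod : Complex.exp (2 * Real.pi * Complex.I * k * (1 : ℝ)) = 1 := by
      rw [← Complex.exp_int_mul_two_pi_mul_I k]
      push_cast
      ring_nf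
    rw [integral_exp_mul_complex hc, hperiod]
    simp

lemma integral_conj_e_pow_mul_e_pow (m n : ℕ) :
    ∫ t in (0 : ℝ)..1, conj (e t ^ m) * e t ^ n = if m = n then 1 else 0 := by
  simp_rw [conj_e_pow_mul_e_pow, integral_exp_two_pi_I_int_mul, sub_eq_zero, Nat.cast_inj,
    eq_comm]

lemma hasSum_mul_intervalIntegral_of_bounded {a b M : ℝ} {c : ℕ → ℂ} (hc : Summable (‖c ·‖))
    {g : ℕ → ℝ → ℂ} (hg : ∀ n, Continuous (g n)) (hM : ∀ n t, ‖g n t‖ ≤ M) :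
    HasSum (fun n => c n * ∫ t in a..b, g n t) (∫ t in a..b, ∑' n, c n * g n t) := by
  have hbound : ∀ n t, ‖c n * g n t‖ ≤ ‖c n‖ * M := fun n t => by
    rw [norm_mul]
    gcongr
    exact hM n t
  simp_rw [← intervalIntegral.integral_const_mul]
  exact intervalIntegral.hasSum_integral_of_dominated_convergence (fun n _ => ‖c n‖ * M)
    (fun n => (continuous_const.mul (hg n)).aestronglyMeasurable)
    (fun n => ae_of_all _ fun t _ => hbound n t) (ae_of_all _ fun _ _ => hc.mul_right M)
    intervalIntegrable_const
    (ae_of_all _ fun t _ => ((hc.mul_right M).of_norm_bounded (hbound · t)).hasSum)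

lemma integral_conj_e_pow_mul_tsum {a : ℕ → ℂ} (ha : Summable (‖a ·‖)) (n : ℕ) :
    ∫ t in (0 : ℝ)..1, conj (e t ^ n) * ∑' m, a m * e t ^ m = a n := by
  have key := hasSum_mul_intervalIntegral_of_bounded (a := 0) (b := 1) (M := 1) ha
    (g := fun m t => conj (e t ^ n) * e t ^ m)
    (fun m => (Complex.continuous_conj.comp (continuous_e.pow n)).mul (continuous_e.pow m))
    (fun m t => by simp [norm_e])
  simp only [integral_conj_e_pow_mul_e_pow, mul_ite, mul_one, mul_zero] at key
  simp_rw [eq_comm (a := n), ← mul_left_comm _ (a _), tsum_mul_left] at key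
  simpa using key.unique (hasSum_single n fun m hm => if_neg hm)

lemma hasSum_norm_sq_integral_norm_sq_tsum_mul_e_pow {a : ℕ → ℂ} (ha : Summable (‖a ·‖)) :
    HasSum (fun n => ‖a n‖ ^ 2) (∫ t in (0 : ℝ)..1, ‖∑' m, a m * e t ^ m‖ ^ 2) := by
  set f := fun t => ∑' m, a m * e t ^ m with hf
  have hterm : ∀ m t, ‖a m * e t ^ m‖ = ‖a m‖ := fun m t => by simp [norm_e]
  have hf_cont : Continuous f :=
    continuous_tsum (fun m => continuous_const.mul (continuous_e.pow m)) ha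
      (fun m t => (hterm m t).le)
  have hf_bound : ∀ t, ‖f t‖ ≤ ∑' m, ‖a m‖ := fun t => by
    simpa only [hterm] using norm_tsum_le_tsum_norm (ha.congr fun m => (hterm m t).symm)
  have key := hasSum_mul_intervalIntegral_of_bounded (a := 0) (b := 1) (c := fun n => conj (a n))
    (by simpa using ha) (g := fun n t => conj (e t ^ n) * f t)
    (fun n => (Complex.continuous_conj.comp (continuous_e.pow n)).mul hf_cont)
    (fun n t => by simpa [norm_e] using hf_bound t)
  simp only [hf, integral_conj_e_pow_mul_tsum ha, Complex.conj_mul'] at key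
  rw [← Complex.hasSum_ofReal, ← intervalIntegral.integral_ofReal]
  convert key using 2 with t
  · norm_cast
  · simp_rw [← mul_assoc, ← map_mul, tsum_mul_right, ← Complex.conj_tsum, Complex.conj_mul']
    norm_cast

lemma integral_norm_one_sub_mul_e_rpow (x : ℝ) {z : ℂ} (hz : ‖z‖ < 1) :
    ∫ t in (0 : ℝ)..1, ‖1 - z * e t‖ ^ (2 * x) = ∑' m, genBinom x m ^ 2 * ‖z‖ ^ (2 * m) := by
  set a : ℕ → ℂ := fun m => genBinom x m * (-z) ^ m with ha_def
  have ha : Summable (‖a ·‖) := summable_norm_genBinom_mul_pow x (by rwa [norm_neg])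
  have hsum : ∀ t, ∑' m, a m * e t ^ m = (1 - z * e t) ^ (x : ℂ) := fun t => by
    have hzt : ‖-(z * e t)‖ < 1 := by rwa [norm_neg, norm_mul, norm_e, mul_one]
    simp_rw [ha_def, mul_assoc, ← mul_pow, neg_mul, (hasSum_genBinom_mul_pow x hzt).tsum_eq,
      ← sub_eq_add_neg]
  have hnorm : ∀ t, ‖1 - z * e t‖ ^ (2 * x) = ‖∑' m, a m * e t ^ m‖ ^ 2 := fun t => by
    rw [hsum, Complex.norm_cpow_real, ← Real.rpow_natCast, ← Real.rpow_mul (norm_nonneg _),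
      Nat.cast_ofNat, mul_comm x]
  simp_rw [hnorm]
  rw [← (hasSum_norm_sq_integral_norm_sq_tsum_mul_e_pow ha).tsum_eq]
  congr with m
  rw [ha_def, norm_mul, mul_pow, norm_pow, norm_neg, ← pow_mul, Complex.norm_real,
    Real.norm_eq_abs, sq_abs, mul_comm m]

theorem Ip_series (p r : ℝ) (hp : 0 < p) (hr0 : 0 < r) (hr1 : r < 1) :
    Ip p r = ∑' m : ℕ, (genBinom (p/2) m) ^ 2 * r ^ ((2 * m) / p : ℝ) := by
  have hs0 : 0 ≤ r ^ (1 / p) := Real.rpow_nonneg hr0.le _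
  have hs : ‖((r ^ (1 / p) : ℝ) : ℂ)‖ < 1 := by
    rw [Complex.norm_real, Real.norm_of_nonneg hs0]
    exact Real.rpow_lt_one hr0.le hr1 (by positivity)
  have key := integral_norm_one_sub_mul_e_rpow (p / 2) hs
  rw [mul_div_cancel₀ _ two_ne_zero] at key
  rw [Ip, key]
  congr with m
  rw [Complex.norm_real, Real.norm_of_nonneg hs0, ← Real.rpow_natCast (r ^ (1 / p)),
    ← Real.rpow_mul hr0.le]
  congr 2
  push_cast
  ring
end

section
/- For p > 0, ∫₀¹ |1 - e(t)|^p dt = Γ(p+1)/Γ(p/2+1)², where e(t) = exp(2πi t) and Γ is the gamma function. -/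
open MeasureTheory

/-!
Since `|1 - e(t)| = 2 |sin πt|`, the substitution `θ = πt` gives `(4^p / π) ∫₀^π (sin θ / 2)^p dθ`.
The further substitution `x = (1 - cos θ) / 2`, for which `x (1 - x) = (sin θ / 2)^2` and
`dx = (sin θ / 2) dθ`, turns this into the Beta integral `B((p+1)/2, (p+1)/2)`, and Legendre's
duplication formula `Γ((p+1)/2) Γ(p/2+1) = 2^{-p} √π Γ(p+1)` simplifies the result.
-/

open Real Set

lemma norm_one_sub_e (t : ℝ) : ‖1 - e t‖ = 2 * |sin (π * t)| := by
  rw [e, norm_sub_rev, show 2 * π * Complex.I * t = Complex.I * ↑(2 * π * t) by push_cast; ring,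
    Complex.norm_exp_I_mul_ofReal_sub_one, show 2 * π * t / 2 = π * t by ring, norm_mul,
    Real.norm_two, Real.norm_eq_abs]

lemma image_one_sub_cos_div_two_Ioo : (fun θ ↦ (1 - cos θ) / 2) '' Ioo 0 π = Ioo 0 1 := by
  refine Subset.antisymm ?_ fun x hx ↦ ⟨arccos (1 - 2 * x), ?_, ?_⟩
  · rintro _ ⟨θ, hθ, rfl⟩
    have := mapsTo_cos_Ioo hθ
    constructor <;> linarith [this.1, this.2]
  · exact ⟨arccos_pos.2 (by linarith [hx.1]), arccos_lt_pi.2 (by linarith [hx.2])⟩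
  · dsimp only
    rw [cos_arccos (by linarith [hx.2]) (by linarith [hx.1])]
    ring

lemma injOn_one_sub_cos_div_two : InjOn (fun θ ↦ (1 - cos θ) / 2) (Ioo 0 π) :=
  fun x hx y hy h ↦ injOn_cos (Ioo_subset_Icc_self hx) (Ioo_subset_Icc_self hy) (by linarith [h])

lemma integral_mul_one_sub_rpow_eq_integral_sin_div_two_rpow (a : ℝ) :
    ∫ x in 0..1, (x * (1 - x)) ^ a = ∫ θ in 0..π, (sin θ / 2) ^ (2 * a + 1) := by
  have hderiv : ∀ θ ∈ Ioo 0 π,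
      HasDerivWithinAt (fun θ ↦ (1 - cos θ) / 2) (sin θ / 2) (Ioo 0 π) θ := fun θ _ ↦ by
    simpa using (((hasDerivAt_cos θ).const_sub 1).div_const 2).hasDerivWithinAt
  have hsubst := integral_image_eq_integral_abs_deriv_smul measurableSet_Ioo hderiv
    injOn_one_sub_cos_div_two (fun x ↦ (x * (1 - x)) ^ a)
  rw [image_one_sub_cos_div_two_Ioo] at hsubst
  rw [intervalIntegral.integral_of_le zero_le_one, intervalIntegral.integral_of_le pi_pos.le,
    integral_Ioc_eq_integral_Ioo, integral_Ioc_eq_integral_Ioo, hsubst]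
  refine setIntegral_congr_fun measurableSet_Ioo fun θ hθ ↦ ?_
  have hs : 0 < sin θ / 2 := by have := sin_pos_of_pos_of_lt_pi hθ.1 hθ.2; positivity
  have hsq : (1 - cos θ) / 2 * (1 - (1 - cos θ) / 2) = (sin θ / 2) ^ 2 := by
    nlinarith [sin_sq_add_cos_sq θ]
  simp only [smul_eq_mul, hsq, abs_of_pos hs]
  rw [rpow_add hs, rpow_one, ← rpow_natCast, ← rpow_mul hs.le]
  push_cast; ring

lemma integral_rpow_mul_one_sub_rpow {u v : ℝ} (hu : 0 < u) (hv : 0 < v) :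
    ∫ x in 0..1, x ^ (u - 1) * (1 - x) ^ (v - 1) = Gamma u * Gamma v / Gamma (u + v) := by
  have h := Complex.betaIntegral_eq_Gamma_mul_div u v (by simpa) (by simpa)
  rw [Complex.betaIntegral, ← Complex.ofReal_add, Complex.Gamma_ofReal, Complex.Gamma_ofReal,
    Complex.Gamma_ofReal] at h
  apply Complex.ofReal_injective
  push_cast
  rw [← h, ← intervalIntegral.integral_ofReal]
  refine intervalIntegral.integral_congr fun x hx ↦ ?_
  rw [uIcc_of_le zero_le_one] at hx
  push_cast
  rw [Complex.ofReal_cpow hx.1, Complex.ofReal_cpow (sub_nonneg.2 hx.2)]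
  push_cast; rfl

lemma integral_sin_div_two_rpow {p : ℝ} (hp : -1 < p) :
    ∫ θ in 0..π, (sin θ / 2) ^ p = Gamma ((p + 1) / 2) ^ 2 / Gamma (p + 1) := by
  have hs : 0 < (p + 1) / 2 := by linarith
  have h := integral_mul_one_sub_rpow_eq_integral_sin_div_two_rpow ((p + 1) / 2 - 1)
  rw [show 2 * ((p + 1) / 2 - 1) + 1 = p by ring] at h
  have hB := integral_rpow_mul_one_sub_rpow hs hs
  rw [show (p + 1) / 2 + (p + 1) / 2 = p + 1 by ring] at hB
  rw [← h, sq, ← hB]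
  refine intervalIntegral.integral_congr fun x hx ↦ ?_
  rw [uIcc_of_le zero_le_one] at hx
  exact mul_rpow hx.1 (sub_nonneg.2 hx.2)

lemma Gamma_add_one_div_two_mul_Gamma_div_two_add_one (p : ℝ) :
    Gamma ((p + 1) / 2) * Gamma (p / 2 + 1) = Gamma (p + 1) * (2 ^ p)⁻¹ * √π := by
  have h := Gamma_mul_Gamma_add_half ((p + 1) / 2)
  rwa [show (p + 1) / 2 + 1 / 2 = p / 2 + 1 by ring, show 2 * ((p + 1) / 2) = p + 1 by ring,
    show 1 - (p + 1) = -p by ring, rpow_neg zero_le_two] at h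

theorem binomial_integral_gamma (p : ℝ) (hp : 0 < p) :
    ∫ t in (0:ℝ)..1, ‖1 - e t‖ ^ p =
      Real.Gamma (p + 1) / Real.Gamma (p / 2 + 1) ^ 2 := by
  have habs : ∀ θ ∈ uIcc 0 π, (2 * |sin θ|) ^ p = 4 ^ p * (sin θ / 2) ^ p := fun θ hθ ↦ by
    rw [uIcc_of_le pi_pos.le] at hθ
    have hsin := sin_nonneg_of_nonneg_of_le_pi hθ.1 hθ.2
    rw [← mul_rpow zero_le_four (by positivity), abs_of_nonneg hsin]
    ring_nf
  calc ∫ t in (0:ℝ)..1, ‖1 - e t‖ ^ p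
      = ∫ t in (0:ℝ)..1, (2 * |sin (π * t)|) ^ p := by simp_rw [norm_one_sub_e]
    _ = π⁻¹ * ∫ θ in 0..π, (2 * |sin θ|) ^ p := by
      rw [intervalIntegral.integral_comp_mul_left (fun θ ↦ (2 * |sin θ|) ^ p) pi_ne_zero,
        mul_zero, mul_one, smul_eq_mul]
    _ = π⁻¹ * 4 ^ p * (Gamma ((p + 1) / 2) ^ 2 / Gamma (p + 1)) := by
      rw [intervalIntegral.integral_congr habs, intervalIntegral.integral_const_mul,
        integral_sin_div_two_rpow (by linarith), mul_assoc]
    _ = Gamma (p + 1) / Gamma (p / 2 + 1) ^ 2 := by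
      have hΓ := Gamma_add_one_div_two_mul_Gamma_div_two_add_one p
      have hΓ_ne := (Gamma_pos_of_pos (by linarith : 0 < p / 2 + 1)).ne'
      have h4 : (4 : ℝ) ^ p = 2 ^ p * 2 ^ p := by rw [← mul_rpow zero_le_two zero_le_two]; norm_num
      rw [eq_div_of_mul_eq hΓ_ne hΓ, h4]
      field_simp
      rw [sq_sqrt pi_pos.le]
end

section
/- Let 0 ≤ L < M be integers and let α, β be complex numbers, not both zero. If p > 0, then the L_p norm of αz^L + βz^M over the unit circle satisfies ‖αz^L + βz^M‖_p ≥ max{|α|,|β|} · (1 + (p·min{|α|,|β|}/(2·max{|α|,|β|}))²)^{1/p}. -/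
open MeasureTheory

/-- L_p norm of a polynomial over the unit circle -/
noncomputable def polyLp (p : ℝ) (F : Polynomial ℂ) : ℝ :=
  (∫ t in (0:ℝ)..1, ‖F.eval (e t)‖ ^ p) ^ (1/p)

/-!
Factoring out `z ^ L` and using that `z ↦ z ^ (M - L)` preserves averages over the unit circle,
the integral is the circle average of `‖α + β z‖ ^ p`; the substitution `z ↦ z⁻¹` lets us assume
`‖β‖ ≤ ‖α‖`, and dividing by `α` reduces the claim to
`1 + (p ‖w‖ / 2) ^ 2 ≤ circleAverage (‖1 + w z‖ ^ p)` for `‖w‖ ≤ 1`.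
For `‖w‖ < 1` the function `G z = (1 + w z) ^ (p / 2)` is holomorphic on the closed disc with
`‖G‖ ^ 2 = ‖1 + w z‖ ^ p`, and the mean value property, applied to `G` and to its difference
quotient at `0`, gives the Bessel inequality `‖G 0‖ ^ 2 + ‖G' 0‖ ^ 2 ≤ circleAverage ‖G‖ ^ 2`.
The case `‖w‖ = 1` follows by continuity in `w`.
-/

open Metric Real

variable {E : Type*} [NormedAddCommGroup E] [NormedSpace ℝ E]

theorem intervalIntegral_comp_e_eq_circleAverage (φ : ℂ → E) :
    ∫ t in (0:ℝ)..1, φ (e t) = circleAverage φ 0 1 := by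
  have he : ∀ t, e t = circleMap 0 1 (2 * π * t) := fun t => by
    simp only [e, circleMap, zero_add, Complex.ofReal_one, one_mul, Complex.ofReal_mul,
      Complex.ofReal_ofNat]
    ring_nf
  simp_rw [he]
  rw [intervalIntegral.integral_comp_mul_left (fun θ => φ (circleMap 0 1 θ)) two_pi_pos.ne',
    mul_zero, mul_one]
  rfl

theorem circleAverage_comp_pow {φ : ℂ → E} (hφ : CircleIntegrable φ 0 1) {k : ℕ} (hk : k ≠ 0) :
    circleAverage (fun z => φ (z ^ k)) 0 1 = circleAverage φ 0 1 := by
  have hper : Function.Periodic (fun θ => φ (circleMap 0 1 θ)) (2 * π) :=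
    fun θ => by simp only [periodic_circleMap 0 1 θ]
  have hk' : (k : ℝ) ≠ 0 := Nat.cast_ne_zero.2 hk
  simp only [circleAverage_def, circleMap_zero_pow, one_pow]
  rw [intervalIntegral.integral_comp_mul_left (fun θ => φ (circleMap 0 1 θ)) hk', mul_zero]
  have := hper.intervalIntegral_add_zsmul_eq k 0
    (hper.intervalIntegrable₀ two_pi_pos.ne' hφ)
  simp only [zero_add, zsmul_eq_mul, Int.cast_natCast] at this
  rw [this, ← Int.cast_smul_eq_zsmul ℝ, Int.cast_natCast, inv_smul_smul₀ hk']

theorem DiffContOnCl.dslope {f : ℂ → ℂ} {c : ℂ} {r : ℝ} (hf : DiffContOnCl ℂ f (ball c r))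
    (hr : 0 < r) : DiffContOnCl ℂ (dslope f c) (ball c r) :=
  ⟨(Complex.differentiableOn_dslope (ball_mem_nhds c hr)).2 hf.differentiableOn,
    (continuousOn_dslope (Filter.mem_of_superset (ball_mem_nhds c hr) subset_closure)).2
      ⟨hf.continuousOn, hf.differentiableAt isOpen_ball (mem_ball_self hr)⟩⟩

theorem sq_norm_add_mul_of_norm_eq_one {a b z : ℂ} (hz : ‖z‖ = 1) :
    ‖a + z * b‖ ^ 2 = ‖a‖ ^ 2 + ‖b‖ ^ 2 + (2 * (starRingEnd ℂ) a * z * b).re := by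
  rw [@norm_add_sq ℂ, norm_mul, hz, one_mul, RCLike.inner_apply', mul_assoc, mul_assoc,
    RCLike.re_to_complex, ← Complex.ofReal_ofNat, Complex.re_ofReal_mul]
  ring

theorem circleAverage_sq_norm_eq_add_dslope {f : ℂ → ℂ} (hf : DiffContOnCl ℂ f (ball 0 1)) :
    circleAverage (fun z => ‖f z‖ ^ 2) 0 1 =
      ‖f 0‖ ^ 2 + circleAverage (fun z => ‖dslope f 0 z‖ ^ 2) 0 1 := by
  have hq : DiffContOnCl ℂ (dslope f 0) (ball 0 1) := hf.dslope one_pos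
  set h : ℂ → ℂ := fun z => 2 * (starRingEnd ℂ) (f 0) * z * dslope f 0 z
  have hh : DiffContOnCl ℂ h (ball 0 1) :=
    ((differentiable_id.const_mul _).diffContOnCl).smul hq
  have hsphere : ∀ z ∈ sphere (0 : ℂ) |1|,
      ‖f z‖ ^ 2 = ‖f 0‖ ^ 2 + ‖dslope f 0 z‖ ^ 2 + (h z).re := by
    intro z hz
    rw [abs_one, mem_sphere_zero_iff_norm] at hz
    have := sub_smul_dslope f 0 z
    rw [sub_zero, smul_eq_mul] at this
    rw [← sq_norm_add_mul_of_norm_eq_one hz, this, add_sub_cancel]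
  have hcont : ∀ {g : ℂ → ℂ}, DiffContOnCl ℂ g (ball 0 1) → ContinuousOn g (sphere 0 |1|) :=
    fun hg => hg.continuousOn.mono (by
      rw [closure_ball 0 one_ne_zero, abs_one]; exact sphere_subset_closedBall)
  have hmean : circleAverage h 0 1 = 0 := by
    have hh' : DiffContOnCl ℂ h (ball 0 |1|) := by rwa [abs_one]
    rw [hh'.circleAverage]
    simp [h]
  have hre : circleAverage (fun z => (h z).re) 0 1 = 0 := by
    calc circleAverage (fun z => (h z).re) 0 1 = Complex.reCLM (circleAverage h 0 1) :=
          Complex.reCLM.circleAverage_comp_comm (hcont hh).circleIntegrable'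
      _ = 0 := by simp [hmean]
  have hq_int : CircleIntegrable (fun z => ‖dslope f 0 z‖ ^ 2) 0 1 :=
    ((hcont hq).norm.pow 2).circleIntegrable'
  have hc_int : CircleIntegrable (fun _ => ‖f 0‖ ^ 2) 0 1 := circleIntegrable_const _ 0 1
  have hre_int : CircleIntegrable (fun z => (h z).re) 0 1 :=
    (Complex.continuous_re.comp_continuousOn (hcont hh)).circleIntegrable'
  rw [circleAverage_congr_sphere hsphere,
    circleAverage_fun_add (hc_int.add hq_int : CircleIntegrable (fun z => _ + _) 0 1) hre_int,
    circleAverage_fun_add hc_int hq_int, circleAverage_const, hre, add_zero]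

theorem sq_norm_add_sq_norm_deriv_le_circleAverage {f : ℂ → ℂ}
    (hf : DiffContOnCl ℂ f (ball 0 1)) :
    ‖f 0‖ ^ 2 + ‖deriv f 0‖ ^ 2 ≤ circleAverage (fun z => ‖f z‖ ^ 2) 0 1 := by
  have hq := hf.dslope one_pos
  rw [circleAverage_sq_norm_eq_add_dslope hf, circleAverage_sq_norm_eq_add_dslope hq,
    dslope_same, ← add_assoc]
  exact le_add_of_nonneg_right (circleAverage_nonneg_of_nonneg fun z _ => by positivity)

theorem one_add_sq_le_circleAverage_norm_one_add_mul_rpow_of_norm_lt_one (p : ℝ) {w : ℂ}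
    (hw : ‖w‖ < 1) :
    1 + (p * ‖w‖ / 2) ^ 2 ≤ circleAverage (fun z => ‖1 + w * z‖ ^ p) 0 1 := by
  set c : ℂ := ((p / 2 : ℝ) : ℂ)
  set G : ℂ → ℂ := fun z => (1 + w * z) ^ c
  have hslit : ∀ z ∈ closedBall (0 : ℂ) 1, 1 + w * z ∈ Complex.slitPlane := by
    intro z hz
    refine Complex.mem_slitPlane_of_norm_lt_one ?_
    rw [norm_mul]
    exact (mul_le_of_le_one_right (norm_nonneg w) (mem_closedBall_zero_iff.1 hz)).trans_lt hw
  have hG : ∀ z ∈ closedBall (0 : ℂ) 1, HasDerivAt G (c * (1 + w * z) ^ (c - 1) * w) z := by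
    intro z hz
    simpa using (((hasDerivAt_id z).const_mul w).const_add 1).cpow_const (hslit z hz)
  have hGdiff : DiffContOnCl ℂ G (ball 0 1) := by
    refine DifferentiableOn.diffContOnCl ?_
    rw [closure_ball 0 one_ne_zero]
    exact fun z hz => (hG z hz).differentiableAt.differentiableWithinAt
  have hnorm : ∀ z, ‖G z‖ ^ 2 = ‖1 + w * z‖ ^ p := by
    intro z
    rw [Complex.norm_cpow_real, ← Real.rpow_natCast, ← Real.rpow_mul (norm_nonneg _)]
    norm_num
  have hbessel := sq_norm_add_sq_norm_deriv_le_circleAverage hGdiff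
  rw [(hG 0 (mem_closedBall_self zero_le_one)).deriv] at hbessel
  simp_rw [hnorm] at hbessel
  convert hbessel using 2
  · simp
  · simp [c, mul_pow, div_pow]
    ring

theorem continuous_circleAverage_norm_one_add_mul_rpow {p : ℝ} (hp : 0 ≤ p) :
    Continuous fun w : ℂ => circleAverage (fun z => ‖1 + w * z‖ ^ p) 0 1 := by
  have : Continuous fun x : ℂ × ℝ => ‖1 + x.1 * circleMap 0 1 x.2‖ ^ p :=
    (by fun_prop : Continuous fun x : ℂ × ℝ => ‖1 + x.1 * circleMap 0 1 x.2‖).rpow_const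
      fun _ => Or.inr hp
  simp only [circleAverage_def]
  fun_prop

theorem one_add_sq_le_circleAverage_norm_one_add_mul_rpow {p : ℝ} (hp : 0 ≤ p) {w : ℂ}
    (hw : ‖w‖ ≤ 1) :
    1 + (p * ‖w‖ / 2) ^ 2 ≤ circleAverage (fun z => ‖1 + w * z‖ ^ p) 0 1 := by
  have hclosed : IsClosed {w : ℂ | 1 + (p * ‖w‖ / 2) ^ 2 ≤
      circleAverage (fun z => ‖1 + w * z‖ ^ p) 0 1} :=
    isClosed_le (by fun_prop) (continuous_circleAverage_norm_one_add_mul_rpow hp)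
  have hball : ball (0 : ℂ) 1 ⊆ {w : ℂ | 1 + (p * ‖w‖ / 2) ^ 2 ≤
      circleAverage (fun z => ‖1 + w * z‖ ^ p) 0 1} := fun w hw =>
    one_add_sq_le_circleAverage_norm_one_add_mul_rpow_of_norm_lt_one p (mem_ball_zero_iff.1 hw)
  rw [← hclosed.closure_subset_iff, closure_ball 0 one_ne_zero] at hball
  exact hball (mem_closedBall_zero_iff.2 hw)

theorem circleAverage_comp_norm_add_mul_comm (g : ℝ → E) (α β : ℂ) :
    circleAverage (fun z => g ‖α + β * z‖) 0 1 = circleAverage (fun z => g ‖β + α * z‖) 0 1 := by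
  rw [← circleAverage_zero_one_congr_inv]
  refine circleAverage_congr_sphere fun z hz => ?_
  rw [abs_one, mem_sphere_zero_iff_norm] at hz
  have hz0 : z ≠ 0 := norm_ne_zero_iff.1 (hz.symm ▸ one_ne_zero)
  have : α + β * z⁻¹ = z⁻¹ * (β + α * z) := by field_simp; ring
  simp only [this, norm_mul, norm_inv, hz, inv_one, one_mul]

theorem rpow_mul_one_add_sq_le_circleAverage {p : ℝ} (hp : 0 ≤ p) {α β : ℂ} (hα : α ≠ 0)
    (hβα : ‖β‖ ≤ ‖α‖) :
    ‖α‖ ^ p * (1 + (p * ‖β‖ / (2 * ‖α‖)) ^ 2) ≤ circleAverage (fun z => ‖α + β * z‖ ^ p) 0 1 := by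
  have hα' : 0 < ‖α‖ := norm_pos_iff.2 hα
  have hfactor : ∀ z, ‖α + β * z‖ ^ p = ‖α‖ ^ p • ‖1 + β / α * z‖ ^ p := fun z => by
    rw [smul_eq_mul, ← Real.mul_rpow (norm_nonneg _) (norm_nonneg _), ← norm_mul]
    congr 2
    field_simp
  simp_rw [hfactor, circleAverage_fun_smul, smul_eq_mul]
  refine mul_le_mul_of_nonneg_left ?_ (by positivity)
  have hw : ‖β / α‖ ≤ 1 := by rw [norm_div]; exact div_le_one_of_le₀ hβα hα'.le
  calc 1 + (p * ‖β‖ / (2 * ‖α‖)) ^ 2 = 1 + (p * ‖β / α‖ / 2) ^ 2 := by rw [norm_div]; ring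
    _ ≤ _ := one_add_sq_le_circleAverage_norm_one_add_mul_rpow hp hw

theorem max_rpow_mul_le_circleAverage {p : ℝ} (hp : 0 ≤ p) {α β : ℂ} (hαβ : ¬(α = 0 ∧ β = 0)) :
    max ‖α‖ ‖β‖ ^ p * (1 + (p * min ‖α‖ ‖β‖ / (2 * max ‖α‖ ‖β‖)) ^ 2) ≤
      circleAverage (fun z => ‖α + β * z‖ ^ p) 0 1 := by
  wlog hβα : ‖β‖ ≤ ‖α‖ generalizing α β
  · rw [max_comm, min_comm, circleAverage_comp_norm_add_mul_comm (· ^ p)]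
    exact this (fun h => hαβ h.symm) (le_of_not_ge hβα)
  have hα : α ≠ 0 := by
    rintro rfl
    exact hαβ ⟨rfl, norm_le_zero_iff.1 (by simpa using hβα)⟩
  rw [max_eq_left hβα, min_eq_right hβα]
  exact rpow_mul_one_add_sq_le_circleAverage hp hα hβα

open Polynomial in
theorem norm_eval_binomial_of_norm_eq_one {L M : ℕ} (hLM : L ≤ M) (α β : ℂ) {z : ℂ}
    (hz : ‖z‖ = 1) :
    ‖(C α * X ^ L + C β * X ^ M).eval z‖ = ‖α + β * z ^ (M - L)‖ := by
  have : α * z ^ L + β * z ^ M = z ^ L * (α + β * z ^ (M - L)) := by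
    rw [← Nat.add_sub_cancel' hLM, pow_add, Nat.add_sub_cancel_left]
    ring
  simp [this, hz]

open Polynomial in
theorem integral_norm_eval_binomial_rpow {L M : ℕ} (hLM : L < M) (α β : ℂ) {p : ℝ}
    (hp : 0 ≤ p) :
    ∫ t in (0:ℝ)..1, ‖(C α * X ^ L + C β * X ^ M).eval (e t)‖ ^ p =
      circleAverage (fun z => ‖α + β * z‖ ^ p) 0 1 := by
  have hcont : Continuous fun z : ℂ => ‖α + β * z‖ ^ p :=
    (by fun_prop : Continuous fun z : ℂ => ‖α + β * z‖).rpow_const fun _ => Or.inr hp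
  rw [intervalIntegral_comp_e_eq_circleAverage fun z => ‖eval z (C α * X ^ L + C β * X ^ M)‖ ^ p,
    ← circleAverage_comp_pow hcont.continuousOn.circleIntegrable' (Nat.sub_ne_zero_of_lt hLM)]
  refine circleAverage_congr_sphere fun z hz => ?_
  rw [abs_one, mem_sphere_zero_iff_norm] at hz
  rw [norm_eval_binomial_of_norm_eq_one hLM.le α β hz]

theorem binomial_Lp_lower_bound_one (L M : ℕ) (hLM : L < M) (α β : ℂ)
    (hαβ : ¬(α = 0 ∧ β = 0)) (p : ℝ) (hp : 0 < p) :
    polyLp p (Polynomial.C α * Polynomial.X ^ L + Polynomial.C β * Polynomial.X ^ M) ≥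
      max ‖α‖ ‖β‖ *
        (1 + (p * min ‖α‖ ‖β‖ /
          (2 * max ‖α‖ ‖β‖)) ^ 2) ^ (1/p) := by
  rw [polyLp, integral_norm_eval_binomial_rpow hLM α β hp.le, ge_iff_le]
  have hmax : 0 ≤ max ‖α‖ ‖β‖ := le_max_of_le_left (norm_nonneg α)
  calc max ‖α‖ ‖β‖ * (1 + (p * min ‖α‖ ‖β‖ / (2 * max ‖α‖ ‖β‖)) ^ 2) ^ (1 / p)
      = (max ‖α‖ ‖β‖ ^ p * (1 + (p * min ‖α‖ ‖β‖ / (2 * max ‖α‖ ‖β‖)) ^ 2)) ^ (1 / p) := by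
        rw [Real.mul_rpow (by positivity) (by positivity), ← Real.rpow_mul hmax,
          mul_one_div_cancel hp.ne', Real.rpow_one]
    _ ≤ _ := Real.rpow_le_rpow (by positivity) (max_rpow_mul_le_circleAverage hp.le hαβ)
        (by positivity)
end

section
/- Let F(z) = Σ_{n=0}^N a_n z^n be a polynomial with complex coefficients, and let L, M be integers with 0 ≤ L < M ≤ N and M - L > max{L, N - M}. Then the supremum norm of F over the closed unit disc satisfies ‖F‖_∞ ≥ |a_L| + |a_M|. -/
/-!
Let `d = M - L` and let `ζ` be a primitive `d`-th root of unity. Averaging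
`ζ ^ (-j L) F(ζ ^ j z)` over `j < d` extracts the monomials `a_i z ^ i` with `i ≡ L [MOD d]`,
and the gap condition `d > max L (N - M)` leaves only `i = L` and `i = M = L + d`. Hence
`‖a_L z ^ L + a_M z ^ M‖ ≤ ‖F‖_∞` for `‖z‖ ≤ 1`, and a unimodular `z` whose `d`-th power aligns
the arguments of `a_L` and `a_M z ^ d` turns the left side into `‖a_L‖ + ‖a_M‖`.
-/

open Finset Polynomial

namespace IsPrimitiveRoot

variable {K : Type*} [Field K] {ζ : K} {d : ℕ}

theorem sum_pow_zpow_eq (hζ : IsPrimitiveRoot ζ d) (n : ℤ) :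
    ∑ j ∈ range d, (ζ ^ n) ^ j = if (d : ℤ) ∣ n then (d : K) else 0 := by
  split_ifs with hdvd
  · simp [(hζ.zpow_eq_one_iff_dvd n).mpr hdvd]
  · have hne : ζ ^ n - 1 ≠ 0 :=
      sub_ne_zero.mpr fun h => hdvd ((hζ.zpow_eq_one_iff_dvd n).mp h)
    have hpow : (ζ ^ n) ^ d = 1 := by
      rw [← zpow_natCast, ← zpow_mul, mul_comm, zpow_mul, zpow_natCast, hζ.pow_eq_one, one_zpow]
    have := mul_geom_sum (ζ ^ n) d
    rw [hpow, sub_self] at this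
    exact (mul_eq_zero.mp this).resolve_left hne

theorem sum_zpow_mul_eval_mul_eq (hζ : IsPrimitiveRoot ζ d) (hd : d ≠ 0) (F : K[X]) {n : ℕ}
    (hn : F.natDegree < n) (L : ℕ) (z : K) :
    ∑ j ∈ range d, ζ ^ (-(j * L : ℤ)) * F.eval (ζ ^ j * z) =
      d * ∑ i ∈ range n with i ≡ L [MOD d], F.coeff i * z ^ i := by
  have hterm (j i : ℕ) : ζ ^ (-(j * L : ℤ)) * (F.coeff i * (ζ ^ j * z) ^ i) =
      F.coeff i * z ^ i * (ζ ^ ((i : ℤ) - L)) ^ j := by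
    rw [← zpow_natCast (ζ ^ ((i : ℤ) - L)), ← zpow_mul, mul_pow, ← pow_mul,
      ← zpow_natCast ζ (j * i), show ((i : ℤ) - L) * j = -(j * L : ℤ) + (j * i : ℕ) by push_cast; ring,
      zpow_add₀ (hζ.ne_zero hd)]
    ring
  calc ∑ j ∈ range d, ζ ^ (-(j * L : ℤ)) * F.eval (ζ ^ j * z)
      = ∑ i ∈ range n, F.coeff i * z ^ i * ∑ j ∈ range d, (ζ ^ ((i : ℤ) - L)) ^ j := by
        simp_rw [eval_eq_sum_range' hn, mul_sum, hterm]
        exact sum_comm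
    _ = ∑ i ∈ range n with i ≡ L [MOD d], F.coeff i * z ^ i * d := by
        simp_rw [hζ.sum_pow_zpow_eq, dvd_sub_comm, ← Nat.modEq_iff_dvd, sum_filter, mul_ite,
          mul_zero]
    _ = d * ∑ i ∈ range n with i ≡ L [MOD d], F.coeff i * z ^ i := by
        rw [mul_sum]
        simp_rw [mul_comm]

end IsPrimitiveRoot

theorem Nat.filter_range_modEq_eq_pair {N L d : ℕ} (hL : L < d) (hLN : L + d ≤ N)
    (hNL : N < L + 2 * d) : {i ∈ range (N + 1) | i ≡ L [MOD d]} = {L, L + d} := by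
  ext i
  simp only [mem_filter, mem_range, mem_insert, mem_singleton, Nat.ModEq, Nat.mod_eq_of_lt hL]
  constructor
  · rintro ⟨hi, hmod⟩
    have hdiv := Nat.div_add_mod i d
    have hq : i / d < 2 := Nat.lt_of_mul_lt_mul_left (a := d) (by omega)
    interval_cases i / d <;> omega
  · rintro (rfl | rfl)
    · exact ⟨by omega, Nat.mod_eq_of_lt hL⟩
    · exact ⟨by omega, by rw [Nat.add_mod_right, Nat.mod_eq_of_lt hL]⟩

theorem Complex.exists_norm_eq_one_norm_add_mul_pow (a b : ℂ) {d : ℕ} (hd : d ≠ 0) :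
    ∃ z : ℂ, ‖z‖ = 1 ∧ ‖a + b * z ^ d‖ = ‖a‖ + ‖b‖ := by
  rcases eq_or_ne a 0 with rfl | ha
  · exact ⟨1, by simp⟩
  rcases eq_or_ne b 0 with rfl | hb
  · exact ⟨1, by simp⟩
  set u : ℂ := ‖b‖ * a / (‖a‖ * b)
  have hu : ‖u‖ = 1 := by
    simp only [u, norm_div, norm_mul, Complex.norm_real, norm_norm]
    field_simp
  obtain ⟨z, hzu⟩ := IsAlgClosed.exists_pow_nat_eq u (Nat.pos_of_ne_zero hd)
  have hz : ‖z‖ = 1 := (pow_eq_one_iff_of_nonneg (norm_nonneg z) hd).mp (by rw [← norm_pow, hzu, hu])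
  have hbu : b * u = (‖b‖ / ‖a‖ : ℝ) • a := by
    simp only [u, Complex.real_smul]
    push_cast
    field_simp
  refine ⟨z, hz, ?_⟩
  have hray : SameRay ℝ a (b * u) := hbu ▸ SameRay.sameRay_nonneg_smul_right a (by positivity)
  rw [hzu, hray.norm_add, norm_mul, hu, mul_one]

theorem Polynomial.norm_eval_le_iSup_closedBall (F : ℂ[X]) {r : ℝ} {w : ℂ} (hw : ‖w‖ ≤ r) :
    ‖F.eval w‖ ≤ ⨆ z : Metric.closedBall (0 : ℂ) r, ‖F.eval (z : ℂ)‖ :=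
  le_ciSup (f := fun z : Metric.closedBall (0 : ℂ) r => ‖F.eval (z : ℂ)‖)
    (isCompact_range (by fun_prop)).bddAbove ⟨w, by simpa using hw⟩

theorem Polynomial.norm_sum_coeff_modEq_le_iSup_closedBall (F : ℂ[X]) {n d : ℕ}
    (hn : F.natDegree < n) (hd : d ≠ 0) (L : ℕ) {r : ℝ} {z : ℂ} (hz : ‖z‖ ≤ r) :
    ‖∑ i ∈ range n with i ≡ L [MOD d], F.coeff i * z ^ i‖ ≤
      ⨆ w : Metric.closedBall (0 : ℂ) r, ‖F.eval (w : ℂ)‖ := by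
  set S := ⨆ w : Metric.closedBall (0 : ℂ) r, ‖F.eval (w : ℂ)‖
  have hζ := Complex.isPrimitiveRoot_exp d hd
  set ζ := Complex.exp (2 * Real.pi * Complex.I / d)
  have hζ1 : ‖ζ‖ = 1 := hζ.norm'_eq_one hd
  have hbound : (d : ℝ) * ‖∑ i ∈ range n with i ≡ L [MOD d], F.coeff i * z ^ i‖ ≤ d * S :=
    calc (d : ℝ) * ‖∑ i ∈ range n with i ≡ L [MOD d], F.coeff i * z ^ i‖
        = ‖∑ j ∈ range d, ζ ^ (-(j * L : ℤ)) * F.eval (ζ ^ j * z)‖ := by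
          rw [hζ.sum_zpow_mul_eval_mul_eq hd F hn L z, norm_mul, Complex.norm_natCast]
      _ ≤ ∑ j ∈ range d, ‖ζ ^ (-(j * L : ℤ)) * F.eval (ζ ^ j * z)‖ := norm_sum_le _ _
      _ ≤ ∑ j ∈ range d, S := sum_le_sum fun j _ => by
          rw [norm_mul, norm_zpow, hζ1, one_zpow, one_mul]
          exact F.norm_eval_le_iSup_closedBall (by rwa [norm_mul, norm_pow, hζ1, one_pow, one_mul])
      _ = d * S := by simp
  exact le_of_mul_le_mul_left hbound (by positivity)

theorem sup_norm_lower_bound_general (F : Polynomial ℂ) (N L M : ℕ)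
    (hFN : F.natDegree ≤ N) (hMN : M ≤ N)
    (hgap : M - L > max L (N - M)) :
    (⨆ z : Metric.closedBall (0:ℂ) 1, ‖F.eval (z : ℂ)‖) ≥
      ‖F.coeff L‖ + ‖F.coeff M‖ := by
  obtain ⟨hL, hNM⟩ := max_lt_iff.mp hgap
  set d := M - L
  have hM : M = L + d := by omega
  obtain ⟨z, hz, hnorm⟩ := Complex.exists_norm_eq_one_norm_add_mul_pow (F.coeff L) (F.coeff M)
    (d := d) (by omega)
  have hsection := F.norm_sum_coeff_modEq_le_iSup_closedBall (Nat.lt_succ_of_le hFN)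
    (d := d) (by omega) L hz.le
  rw [Nat.filter_range_modEq_eq_pair hL (by omega) (by omega), sum_pair (by omega), ← hM] at hsection
  calc ‖F.coeff L‖ + ‖F.coeff M‖ = ‖z ^ L * (F.coeff L + F.coeff M * z ^ d)‖ := by
        rw [norm_mul, norm_pow, hz, one_pow, one_mul, hnorm]
    _ = ‖F.coeff L * z ^ L + F.coeff M * z ^ M‖ := by rw [hM, pow_add]; congr 1; ring
    _ ≤ _ := hsection

theorem sup_norm_lower_bound (F : Polynomial ℂ) (N L M : ℕ)
    (hFN : F.natDegree ≤ N) (hLM : L < M) (hMN : M ≤ N)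
    (hgap : M - L > max L (N - M)) :
    (⨆ z : Metric.closedBall (0:ℂ) 1, ‖F.eval (z : ℂ)‖) ≥
      ‖F.coeff L‖ + ‖F.coeff M‖ :=
  sup_norm_lower_bound_general F N L M hFN hMN hgap
end
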